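/- Let t, r, b, k, s ≥ 1 be integers with b ≥ 2, and set θ := √((4s + 4k·log₂(t·r))/(t·r)); assume θ ≤ 1/10. Let Σ = (Σ^(1),…,Σ^(k)) where each Σ^(i) ∈ (S_b)^{[t]×[r]} has all t·r entries independent and uniform on S_b (all k·t·r entries mutually independent). Let Π be any function of Σ taking at most 2^s distinct values. Independently of Σ, let (ℓ₁,v₁),…,(ℓ_k,v_k) be independent, each uniform on [t]×[r]. Call an index i ∈ [k] informed if KL( law(Σ^(i)_{ℓ_i,v_i} | Π(Σ)) ‖ 𝒰_{S_b} ) > θ. Then the probability (over Σ and the index pairs) that more than k/2 indices are informed is at most 2·(16·θ)^{k/4}. -/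

import Mathlib

open scoped Classical
open Finset

/-- KL-divergence (base-2 logarithms) between two distributions on a finite set. -/
noncomputable def KL {Ω : Type*} [Fintype Ω] (μ ν : Ω → ℝ) : ℝ :=
  ∑ x, if 0 < μ x then μ x * Real.logb 2 (μ x / ν x) else 0

/-- The uniform distribution on a finite set. -/
noncomputable def unif (Ω : Type*) [Fintype Ω] : Ω → ℝ := fun _ => 1 / (Fintype.card Ω : ℝ)

/-- The conditional law of the entry `Σ^{(i)}_{ℓ,v}` of a uniformly random matrix tuple
`Σ = (Σ^{(1)},…,Σ^{(k)}) ∈ ((S_b)^{t×r})^k` given `Prot Σ = π`. -/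
noncomputable def condLaw {t r b k : ℕ} {T : Type*}
    (Prot : (Fin k → Fin t → Fin r → Equiv.Perm (Fin b)) → T) (π : T)
    (i : Fin k) (ℓ : Fin t) (v : Fin r) : Equiv.Perm (Fin b) → ℝ :=
  fun x =>
    ((Finset.univ.filter
        (fun S : Fin k → Fin t → Fin r → Equiv.Perm (Fin b) => Prot S = π ∧ S i ℓ v = x)).card : ℝ) /
    ((Finset.univ.filter
        (fun S : Fin k → Fin t → Fin r → Equiv.Perm (Fin b) => Prot S = π)).card : ℝ)

lemma gibbs {Ω : Type*} (s : Finset Ω) (μ ν : Ω → ℝ)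
    (hμ : ∀ x ∈ s, 0 < μ x) (hν : ∀ x ∈ s, 0 < ν x)
    (hμ1 : ∑ x ∈ s, μ x = 1) (hν1 : ∑ x ∈ s, ν x ≤ 1) :
    ∑ x ∈ s, μ x * Real.logb 2 (ν x / μ x) ≤ 0 := by
  have h2 : (0:ℝ) < Real.log 2 := Real.log_pos one_lt_two
  have key : ∑ x ∈ s, μ x * Real.log (ν x / μ x) ≤ 0 := by
    calc ∑ x ∈ s, μ x * Real.log (ν x / μ x)
        ≤ ∑ x ∈ s, (ν x - μ x) := by
          apply Finset.sum_le_sum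
          intro x hx
          have hμx := hμ x hx; have hνx := hν x hx
          have h := Real.log_le_sub_one_of_pos (div_pos hνx hμx)
          calc μ x * Real.log (ν x / μ x) ≤ μ x * (ν x / μ x - 1) :=
                mul_le_mul_of_nonneg_left h hμx.le
            _ = ν x - μ x := by field_simp
      _ ≤ 0 := by rw [Finset.sum_sub_distrib, hμ1]; linarith
  have heq : ∑ x ∈ s, μ x * Real.logb 2 (ν x / μ x)
      = (∑ x ∈ s, μ x * Real.log (ν x / μ x)) / Real.log 2 := by
    rw [Finset.sum_div]
    exact Finset.sum_congr rfl fun x _ => by rw [Real.logb, mul_div_assoc]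
  rw [heq]
  exact div_nonpos_of_nonpos_of_nonneg key h2.le

lemma fiber_sum {Ω X : Type*} [Fintype X] [DecidableEq X]
    (F : Finset Ω) (φ : Ω → X) (G : X → ℝ) :
    ∑ x : X, ((F.filter (fun S => φ S = x)).card : ℝ) * G x = ∑ S ∈ F, G (φ S) := by
  rw [← Finset.sum_fiberwise_of_maps_to (fun S _ => Finset.mem_univ (φ S)) (fun S => G (φ S))]
  apply Finset.sum_congr rfl; intro x _
  rw [Finset.sum_congr rfl (fun S hS => by rw [(Finset.mem_filter.mp hS).2]),
    Finset.sum_const, nsmul_eq_mul]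

lemma sum_prod_eq {ι α : Type*} [Fintype ι] [DecidableEq ι] [Fintype α] (g : ι → α → ℝ) :
    ∑ f : ι → α, ∏ i, g i (f i) = ∏ i, ∑ a, g i a :=
  (Fintype.prod_sum (fun i a => g i a)).symm

lemma KL_nonneg {Ω : Type*} [Fintype Ω] [Nonempty Ω] (μ : Ω → ℝ)
    (hμ0 : ∀ x, 0 ≤ μ x) (hμ1 : ∑ x, μ x = 1) : 0 ≤ KL μ (unif Ω) := by
  classical
  set s : Finset Ω := univ.filter (fun x => 0 < μ x) with hs
  have hcard : (0:ℝ) < (Fintype.card Ω : ℝ) := by exact_mod_cast Fintype.card_pos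
  have hupos : ∀ x : Ω, 0 < unif Ω x := fun x => by simp only [unif]; positivity
  have hsum : ∑ x ∈ s, μ x = 1 := by
    rw [← hμ1]
    apply Finset.sum_subset (Finset.subset_univ s)
    intro x _ hx
    have : ¬ 0 < μ x := by simpa [hs] using hx
    linarith [hμ0 x]
  have husum : ∑ x ∈ s, unif Ω x ≤ 1 := by
    calc ∑ x ∈ s, unif Ω x ≤ ∑ x : Ω, unif Ω x :=
          Finset.sum_le_sum_of_subset_of_nonneg (Finset.subset_univ s)
            (fun x _ _ => (hupos x).le)
      _ = 1 := by
          simp only [unif, Finset.sum_const, Finset.card_univ, nsmul_eq_mul]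
          field_simp
  have hKL : KL μ (unif Ω) = ∑ x ∈ s, μ x * Real.logb 2 (μ x / unif Ω x) := by
    rw [KL, hs, Finset.sum_filter]
  have hflip : ∑ x ∈ s, μ x * Real.logb 2 (μ x / unif Ω x)
      = - ∑ x ∈ s, μ x * Real.logb 2 (unif Ω x / μ x) := by
    rw [← Finset.sum_neg_distrib]
    apply Finset.sum_congr rfl
    intro x hx
    rw [← mul_neg, ← Real.logb_inv, inv_div]
  have := gibbs s μ (unif Ω) (fun x hx => by simpa [hs] using hx)
    (fun x _ => hupos x) hsum husum
  rw [hKL, hflip]; linarith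

/-- marginal of the uniform distribution on `F` at coordinate `(i,ℓ,v)` -/
noncomputable def marg {k t r : ℕ} {P : Type*} [DecidableEq P]
    (F : Finset (Fin k → Fin t → Fin r → P)) (i : Fin k) (ℓ : Fin t) (v : Fin r) :
    P → ℝ :=
  fun x => ((F.filter (fun S => S i ℓ v = x)).card : ℝ) / (F.card : ℝ)

lemma kl_total {k t r : ℕ} {P : Type*} [Fintype P] [DecidableEq P] [Nonempty P]
    (F : Finset (Fin k → Fin t → Fin r → P)) (hF : 0 < F.card) :
    ∑ i : Fin k, ∑ ℓ : Fin t, ∑ v : Fin r, KL (marg F i ℓ v) (unif P)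
      ≤ Real.logb 2 ((Fintype.card (Fin k → Fin t → Fin r → P) : ℝ) / (F.card : ℝ)) := by
  classical
  have hn : (0:ℝ) < (F.card : ℝ) := by exact_mod_cast hF
  have hcP : (0:ℝ) < (Fintype.card P : ℝ) := by exact_mod_cast Fintype.card_pos
  set n : ℝ := (F.card : ℝ) with hndef
  set cP : ℝ := (Fintype.card P : ℝ) with hcPdef
  set μ : Fin k → Fin t → Fin r → P → ℝ := marg F with hμdef
  have hμval : ∀ i ℓ v x, μ i ℓ v x = ((F.filter (fun S => S i ℓ v = x)).card : ℝ) / n :=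
    fun i ℓ v x => rfl
  have hμ0 : ∀ i ℓ v x, 0 ≤ μ i ℓ v x := fun i ℓ v x => by
    rw [hμval]; exact div_nonneg (Nat.cast_nonneg _) hn.le
  have hμsum : ∀ i ℓ v, ∑ x : P, μ i ℓ v x = 1 := by
    intro i ℓ v
    have hc : F.card = ∑ x : P, (F.filter (fun S => S i ℓ v = x)).card :=
      Finset.card_eq_sum_card_fiberwise (fun S _ => Finset.mem_univ (S i ℓ v))
    simp only [hμval, ← Finset.sum_div]
    rw [← Nat.cast_sum, ← hc, ← hndef, div_self hn.ne']
  have hμpos : ∀ S ∈ F, ∀ i ℓ v, 0 < μ i ℓ v (S i ℓ v) := by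
    intro S hS i ℓ v
    have hmem : S ∈ F.filter (fun S' => S' i ℓ v = S i ℓ v) := Finset.mem_filter.mpr ⟨hS, rfl⟩
    have hcpos : 0 < (F.filter (fun S' => S' i ℓ v = S i ℓ v)).card :=
      Finset.card_pos.mpr ⟨S, hmem⟩
    rw [hμval]
    apply div_pos _ hn
    exact_mod_cast hcpos
  have hKLc : ∀ i ℓ v, KL (μ i ℓ v) (unif P)
      = (1/n) * ∑ S ∈ F, Real.logb 2 (μ i ℓ v (S i ℓ v) * cP) := by
    intro i ℓ v
    rw [KL]
    have hterm : ∀ x : P,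
        (if 0 < μ i ℓ v x then μ i ℓ v x * Real.logb 2 (μ i ℓ v x / unif P x) else 0)
        = μ i ℓ v x * Real.logb 2 (μ i ℓ v x * cP) := by
      intro x
      by_cases hx : 0 < μ i ℓ v x
      · rw [if_pos hx]
        congr 2
        rw [unif, ← hcPdef, one_div, div_eq_mul_inv, inv_inv]
      · rw [if_neg hx]
        have h0 : μ i ℓ v x = 0 := le_antisymm (not_lt.mp hx) (hμ0 i ℓ v x)
        rw [h0, zero_mul]
    rw [Finset.sum_congr rfl (fun x _ => hterm x)]
    have h2 : ∀ x : P, μ i ℓ v x * Real.logb 2 (μ i ℓ v x * cP)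
        = ((F.filter (fun S => S i ℓ v = x)).card : ℝ)
            * ((1/n) * Real.logb 2 (μ i ℓ v x * cP)) := by
      intro x; rw [hμval]; ring
    rw [Finset.sum_congr rfl (fun x _ => h2 x),
      fiber_sum F (fun S => S i ℓ v) (fun x => (1/n) * Real.logb 2 (μ i ℓ v x * cP)),
      Finset.mul_sum]
  set g : (Fin k → Fin t → Fin r → P) → ℝ :=
    fun S => ∏ i, ∏ ℓ, ∏ v, μ i ℓ v (S i ℓ v) with hgdef
  have hg0 : ∀ S, 0 ≤ g S := fun S =>
    Finset.prod_nonneg fun i _ => Finset.prod_nonneg fun ℓ _ =>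
      Finset.prod_nonneg fun v _ => hμ0 i ℓ v _
  have hgpos : ∀ S ∈ F, 0 < g S := fun S hS =>
    Finset.prod_pos fun i _ => Finset.prod_pos fun ℓ _ =>
      Finset.prod_pos fun v _ => hμpos S hS i ℓ v
  have hgsum : ∑ S : Fin k → Fin t → Fin r → P, g S = 1 := by
    simp only [hgdef]
    rw [sum_prod_eq (α := Fin t → Fin r → P) (fun i f => ∏ ℓ, ∏ v, μ i ℓ v (f ℓ v))]
    apply Finset.prod_eq_one; intro i _
    rw [sum_prod_eq (α := Fin r → P) (fun ℓ e => ∏ v, μ i ℓ v (e v))]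
    apply Finset.prod_eq_one; intro ℓ _
    rw [sum_prod_eq (α := P) (fun v x => μ i ℓ v x)]
    apply Finset.prod_eq_one; intro v _
    exact hμsum i ℓ v
  have hgF : ∑ S ∈ F, g S ≤ 1 := by
    rw [← hgsum]
    exact Finset.sum_le_sum_of_subset_of_nonneg (Finset.subset_univ F) fun S _ _ => hg0 S
  have hgibbs : ∑ S ∈ F, (1/n) * Real.logb 2 (g S / (1/n)) ≤ 0 :=
    gibbs F (fun _ => 1/n) g (fun S _ => by positivity) hgpos
      (by rw [Finset.sum_const, nsmul_eq_mul, ← hndef, mul_one_div_cancel hn.ne']) hgF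
  have hgibbs2 : (1/n) * ∑ S ∈ F, Real.logb 2 (g S) ≤ - Real.logb 2 n := by
    have h1 : ∑ S ∈ F, (1/n) * Real.logb 2 (g S / (1/n))
        = (1/n) * (∑ S ∈ F, Real.logb 2 (g S)) + Real.logb 2 n := by
      calc ∑ S ∈ F, (1/n) * Real.logb 2 (g S / (1/n))
          = ∑ S ∈ F, ((1/n) * Real.logb 2 (g S) + (1/n) * Real.logb 2 n) := by
            apply Finset.sum_congr rfl; intro S hS
            rw [one_div, div_eq_mul_inv, inv_inv, Real.logb_mul (hgpos S hS).ne' hn.ne']; ring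
        _ = (1/n) * (∑ S ∈ F, Real.logb 2 (g S)) + Real.logb 2 n := by
            rw [Finset.sum_add_distrib, ← Finset.mul_sum, Finset.sum_const, nsmul_eq_mul,
              ← hndef]
            field_simp
    rw [h1] at hgibbs; linarith
  have hSsum : ∀ S ∈ F, ∑ i : Fin k, ∑ ℓ : Fin t, ∑ v : Fin r,
      Real.logb 2 (μ i ℓ v (S i ℓ v) * cP)
      = Real.logb 2 (g S) + (k:ℝ) * ((t:ℝ) * ((r:ℝ) * Real.logb 2 cP)) := by
    intro S hS
    have e2 : Real.logb 2 (g S) = ∑ i : Fin k, ∑ ℓ : Fin t, ∑ v : Fin r,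
        Real.logb 2 (μ i ℓ v (S i ℓ v)) := by
      simp only [hgdef]
      rw [Real.logb_prod _ _ (fun i _ => (Finset.prod_pos fun ℓ _ => Finset.prod_pos
        fun v _ => hμpos S hS i ℓ v).ne')]
      apply Finset.sum_congr rfl; intro i _
      rw [Real.logb_prod _ _ (fun ℓ _ => (Finset.prod_pos fun v _ => hμpos S hS i ℓ v).ne')]
      apply Finset.sum_congr rfl; intro ℓ _
      rw [Real.logb_prod _ _ (fun v _ => (hμpos S hS i ℓ v).ne')]
    have e1 : ∀ (i : Fin k) (ℓ : Fin t) (v : Fin r), Real.logb 2 (μ i ℓ v (S i ℓ v) * cP)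
        = Real.logb 2 (μ i ℓ v (S i ℓ v)) + Real.logb 2 cP := fun i ℓ v =>
      Real.logb_mul (hμpos S hS i ℓ v).ne' hcP.ne'
    simp only [e1, Finset.sum_add_distrib, Finset.sum_const, Finset.card_univ,
      Fintype.card_fin, nsmul_eq_mul]
    rw [← e2]
  have hswap : ∑ i : Fin k, ∑ ℓ : Fin t, ∑ v : Fin r, KL (μ i ℓ v) (unif P)
      = (1/n) * ∑ S ∈ F, (Real.logb 2 (g S) + (k:ℝ) * ((t:ℝ) * ((r:ℝ) * Real.logb 2 cP))) := by
    calc ∑ i : Fin k, ∑ ℓ : Fin t, ∑ v : Fin r, KL (μ i ℓ v) (unif P)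
        = ∑ i : Fin k, ∑ ℓ : Fin t, ∑ v : Fin r, ∑ S ∈ F,
            (1/n) * Real.logb 2 (μ i ℓ v (S i ℓ v) * cP) := by
          apply Finset.sum_congr rfl; intro i _
          apply Finset.sum_congr rfl; intro ℓ _
          apply Finset.sum_congr rfl; intro v _
          rw [hKLc i ℓ v, Finset.mul_sum]
      _ = ∑ i : Fin k, ∑ ℓ : Fin t, ∑ S ∈ F, ∑ v : Fin r,
            (1/n) * Real.logb 2 (μ i ℓ v (S i ℓ v) * cP) := by
          apply Finset.sum_congr rfl; intro i _
          apply Finset.sum_congr rfl; intro ℓ _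
          exact Finset.sum_comm
      _ = ∑ i : Fin k, ∑ S ∈ F, ∑ ℓ : Fin t, ∑ v : Fin r,
            (1/n) * Real.logb 2 (μ i ℓ v (S i ℓ v) * cP) := by
          apply Finset.sum_congr rfl; intro i _
          exact Finset.sum_comm
      _ = ∑ S ∈ F, ∑ i : Fin k, ∑ ℓ : Fin t, ∑ v : Fin r,
            (1/n) * Real.logb 2 (μ i ℓ v (S i ℓ v) * cP) := Finset.sum_comm
      _ = (1/n) * ∑ S ∈ F, (Real.logb 2 (g S) + (k:ℝ) * ((t:ℝ) * ((r:ℝ) * Real.logb 2 cP))) := by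
          rw [Finset.mul_sum]
          apply Finset.sum_congr rfl; intro S hS
          rw [← hSsum S hS, Finset.mul_sum]
          apply Finset.sum_congr rfl; intro i _
          rw [Finset.mul_sum]
          apply Finset.sum_congr rfl; intro ℓ _
          rw [Finset.mul_sum]
  have hcardΩ : ((Fintype.card (Fin k → Fin t → Fin r → P) : ℝ))
      = cP ^ (r * (t * k)) := by
    have hc : Fintype.card (Fin k → Fin t → Fin r → P) = Fintype.card P ^ (r * (t * k)) := by
      rw [Fintype.card_fun, Fintype.card_fun, Fintype.card_fun, Fintype.card_fin,
        Fintype.card_fin, Fintype.card_fin, ← pow_mul, ← pow_mul]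
    rw [hc, hcPdef]
    exact Nat.cast_pow _ _
  have hfinal : (1/n) * ∑ S ∈ F, (Real.logb 2 (g S) + (k:ℝ) * ((t:ℝ) * ((r:ℝ) * Real.logb 2 cP)))
      ≤ Real.logb 2 ((Fintype.card (Fin k → Fin t → Fin r → P) : ℝ) / n) := by
    have hconst : (1/n) * ∑ S ∈ F, (Real.logb 2 (g S) + (k:ℝ) * ((t:ℝ) * ((r:ℝ) * Real.logb 2 cP)))
        = (1/n) * (∑ S ∈ F, Real.logb 2 (g S)) + (k:ℝ) * ((t:ℝ) * ((r:ℝ) * Real.logb 2 cP)) := by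
      rw [Finset.sum_add_distrib, Finset.sum_const, nsmul_eq_mul, ← hndef, mul_add,
        ← mul_assoc, one_div_mul_cancel hn.ne', one_mul]
    rw [hconst, hcardΩ, Real.logb_div (by positivity) hn.ne', Real.logb_pow]
    have hKK : ((r * (t * k) : ℕ) : ℝ) * Real.logb 2 cP
        = (k:ℝ) * ((t:ℝ) * ((r:ℝ) * Real.logb 2 cP)) := by push_cast; ring
    rw [hKK]
    linarith [hgibbs2]
  rw [hswap]
  exact hfinal

lemma prob_many_good {k m : ℕ} {C : Type*} [Fintype C] (hm : m ≤ k)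
    (good : Fin k → C → Prop) (q : ℝ) (hq : 0 ≤ q)
    (hB : ∀ i : Fin k, ((univ.filter (fun c => good i c)).card : ℝ)
        ≤ q * (Fintype.card C : ℝ)) :
    ∑ pv : Fin k → C,
        (if m ≤ (univ.filter (fun i : Fin k => good i (pv i))).card then (1:ℝ) else 0)
      ≤ (k.choose m : ℝ) * q ^ m * (Fintype.card C : ℝ) ^ k := by
  classical
  set cc : ℝ := (Fintype.card C : ℝ) with hcc
  have hcc0 : 0 ≤ cc := by rw [hcc]; positivity
  set χ : Fin k → C → ℝ := fun i c => if good i c then 1 else 0 with hχ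
  have hχ0 : ∀ i c, 0 ≤ χ i c := fun i c => by
    simp only [hχ]; split <;> norm_num
  have step1 : ∀ pv : Fin k → C,
      (if m ≤ (univ.filter (fun i : Fin k => good i (pv i))).card then (1:ℝ) else 0)
      ≤ ∑ A ∈ Finset.powersetCard m (univ : Finset (Fin k)), ∏ i ∈ A, χ i (pv i) := by
    intro pv
    by_cases h : m ≤ (univ.filter (fun i : Fin k => good i (pv i))).card
    · rw [if_pos h]
      obtain ⟨A, hAsub, hAcard⟩ := Finset.exists_subset_card_eq h
      have hmem : A ∈ Finset.powersetCard m (univ : Finset (Fin k)) :=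
        Finset.mem_powersetCard.mpr ⟨Finset.subset_univ A, hAcard⟩
      have hA1 : ∏ i ∈ A, χ i (pv i) = 1 := by
        apply Finset.prod_eq_one
        intro i hi
        have hg : good i (pv i) := (Finset.mem_filter.mp (hAsub hi)).2
        simp only [hχ, if_pos hg]
      rw [← hA1]
      exact Finset.single_le_sum (f := fun A' => ∏ i ∈ A', χ i (pv i))
        (fun A' _ => Finset.prod_nonneg fun i _ => hχ0 i (pv i)) hmem
    · rw [if_neg h]
      exact Finset.sum_nonneg fun A' _ => Finset.prod_nonneg fun i _ => hχ0 i (pv i)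
  have step2 : ∀ A ∈ Finset.powersetCard m (univ : Finset (Fin k)),
      ∑ pv : Fin k → C, ∏ i ∈ A, χ i (pv i) ≤ q ^ m * cc ^ k := by
    intro A hA
    obtain ⟨-, hAcard⟩ := Finset.mem_powersetCard.mp hA
    have hsplit : ∀ pv : Fin k → C,
        ∏ i ∈ A, χ i (pv i) = ∏ i : Fin k, (if i ∈ A then χ i (pv i) else 1) := fun pv =>
      (Fintype.prod_ite_mem A (fun i => χ i (pv i))).symm
    calc ∑ pv : Fin k → C, ∏ i ∈ A, χ i (pv i)
        = ∑ pv : Fin k → C, ∏ i : Fin k, (if i ∈ A then χ i (pv i) else 1) :=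
          Finset.sum_congr rfl fun pv _ => hsplit pv
      _ = ∏ i : Fin k, ∑ c : C, (if i ∈ A then χ i c else 1) :=
          sum_prod_eq (fun i c => if i ∈ A then χ i c else 1)
      _ ≤ ∏ i : Fin k, (if i ∈ A then q * cc else cc) := by
          apply Finset.prod_le_prod
          · intro i _
            exact Finset.sum_nonneg fun c _ => by split <;> [exact hχ0 i c; norm_num]
          · intro i _
            by_cases hi : i ∈ A
            · simp only [if_pos hi]
              have : ∑ c : C, χ i c
                  = ((univ.filter (fun c => good i c)).card : ℝ) := by
                simp only [hχ]
                rw [Finset.sum_boole]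
              rw [this]
              exact hB i
            · simp only [if_neg hi, Finset.sum_const, Finset.card_univ, nsmul_eq_mul,
                mul_one, ← hcc, le_refl]
      _ = (q * cc) ^ m * cc ^ (k - m) := by
          rw [← Finset.prod_mul_prod_compl A]
          rw [Finset.prod_congr rfl (fun i hi => if_pos hi),
            Finset.prod_congr (rfl : Aᶜ = Aᶜ) (fun i hi => if_neg (Finset.mem_compl.mp hi)),
            Finset.prod_const, Finset.prod_const, hAcard, Finset.card_compl,
            Fintype.card_fin, hAcard]
      _ = q ^ m * cc ^ k := by
          rw [mul_pow, mul_assoc, ← pow_add, Nat.add_sub_cancel' hm]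
  calc ∑ pv : Fin k → C,
        (if m ≤ (univ.filter (fun i : Fin k => good i (pv i))).card then (1:ℝ) else 0)
      ≤ ∑ pv : Fin k → C, ∑ A ∈ Finset.powersetCard m (univ : Finset (Fin k)),
          ∏ i ∈ A, χ i (pv i) := Finset.sum_le_sum fun pv _ => step1 pv
    _ = ∑ A ∈ Finset.powersetCard m (univ : Finset (Fin k)), ∑ pv : Fin k → C,
          ∏ i ∈ A, χ i (pv i) := Finset.sum_comm
    _ ≤ ∑ A ∈ Finset.powersetCard m (univ : Finset (Fin k)), q ^ m * cc ^ k :=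
        Finset.sum_le_sum step2
    _ = (k.choose m : ℝ) * q ^ m * cc ^ k := by
        rw [Finset.sum_const, Finset.card_powersetCard, Finset.card_univ, Fintype.card_fin,
          nsmul_eq_mul, mul_assoc]

lemma marg_nonneg {k t r : ℕ} {P : Type*} [DecidableEq P]
    (F : Finset (Fin k → Fin t → Fin r → P)) (i : Fin k) (ℓ : Fin t) (v : Fin r)
    (x : P) : 0 ≤ marg F i ℓ v x :=
  div_nonneg (Nat.cast_nonneg _) (Nat.cast_nonneg _)

lemma marg_sum_one {k t r : ℕ} {P : Type*} [Fintype P] [DecidableEq P]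
    (F : Finset (Fin k → Fin t → Fin r → P)) (hF : 0 < F.card)
    (i : Fin k) (ℓ : Fin t) (v : Fin r) : ∑ x : P, marg F i ℓ v x = 1 := by
  have hn : (0:ℝ) < (F.card : ℝ) := by exact_mod_cast hF
  have hc : F.card = ∑ x : P, (F.filter (fun S => S i ℓ v = x)).card :=
    Finset.card_eq_sum_card_fiberwise (fun S _ => Finset.mem_univ (S i ℓ v))
  simp only [marg, ← Finset.sum_div]
  rw [← Nat.cast_sum, ← hc, div_self hn.ne']

lemma rpow_chain (θ : ℝ) (hθpos : 0 < θ) (hθ : θ ≤ 1/10) (k m : ℕ)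
    (hm2 : (k:ℝ)/2 ≤ (m:ℝ)) :
    (2:ℝ)^k * (θ/4)^m ≤ (16*θ) ^ ((k:ℝ)/4) := by
  have hq0 : (0:ℝ) < θ/4 := by linarith
  have hq1 : θ/4 ≤ 1 := by linarith
  have e1 : (θ/4:ℝ)^m = (θ/4) ^ ((m:ℕ):ℝ) := (Real.rpow_natCast _ m).symm
  have e2 : (θ/4:ℝ) ^ ((m:ℕ):ℝ) ≤ (θ/4) ^ ((k:ℝ)/2) :=
    Real.rpow_le_rpow_of_exponent_ge hq0 hq1 hm2
  have e3 : (2:ℝ)^k = (4:ℝ) ^ ((k:ℝ)/2) := by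
    have h := Real.rpow_natCast_mul (by norm_num : (0:ℝ) ≤ 2) 2 ((k:ℝ)/2)
    rw [show ((2:ℕ):ℝ) * ((k:ℝ)/2) = (k:ℝ) by push_cast; ring] at h
    rw [← Real.rpow_natCast 2 k, h]
    norm_num
  calc (2:ℝ)^k * (θ/4)^m
      ≤ (4:ℝ)^((k:ℝ)/2) * (θ/4)^((k:ℝ)/2) := by
        rw [e3]
        exact mul_le_mul_of_nonneg_left (le_trans (le_of_eq e1) e2) (by positivity)
    _ = (4*(θ/4)) ^ ((k:ℝ)/2) := (Real.mul_rpow (by norm_num) hq0.le).symm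
    _ = θ ^ ((k:ℝ)/2) := by rw [show (4:ℝ)*(θ/4) = θ by ring]
    _ = (θ^2) ^ ((k:ℝ)/4) := by
        have e4 := Real.rpow_natCast_mul hθpos.le 2 ((k:ℝ)/4)
        rw [← e4]
        congr 1
        push_cast; ring
    _ ≤ (16*θ) ^ ((k:ℝ)/4) := by
        apply Real.rpow_le_rpow (by positivity) (by nlinarith) (by positivity)


set_option maxHeartbeats 1000000 in
/-- "informed indices cannot be too many".  With
`θ = √((4s + 4k log₂(tr))/(tr)) ≤ 1/10`, `Σ` uniform, `Π` a function of `Σ` with at most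
`2^s` values, and independent uniform index pairs `(ℓ_i, v_i)`, the probability that more
than `k/2` indices `i` are *informed* (i.e. `KL(law(Σ^{(i)}_{ℓ_i,v_i} | Π(Σ)) ‖ 𝒰_{S_b}) > θ`)
is at most `2·(16θ)^{k/4}`. -/
theorem stmt5 (t r b k s : ℕ) (ht : 1 ≤ t) (hr : 1 ≤ r) (hb : 2 ≤ b) (hk : 1 ≤ k) (hs : 1 ≤ s)
    (θ : ℝ)
    (hθdef : θ = Real.sqrt ((4 * s + 4 * k * Real.logb 2 ((t * r : ℕ) : ℝ)) / ((t * r : ℕ) : ℝ)))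
    (hθ : θ ≤ 1/10)
    (T : Type*) [Fintype T] (hT : Fintype.card T ≤ 2 ^ s)
    (Prot : (Fin k → Fin t → Fin r → Equiv.Perm (Fin b)) → T) :
    ∑ π : T, ∑ pv : Fin k → Fin t × Fin r,
      (((Finset.univ.filter
            (fun S : Fin k → Fin t → Fin r → Equiv.Perm (Fin b) => Prot S = π)).card : ℝ)
          / (Fintype.card (Fin k → Fin t → Fin r → Equiv.Perm (Fin b)) : ℝ))
        * (1 / ((t * r : ℕ) : ℝ) ^ k)
        * (if (k : ℝ) / 2 <
              ((Finset.univ.filter (fun i : Fin k =>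
                  θ < KL (condLaw Prot π i (pv i).1 (pv i).2)
                        (unif (Equiv.Perm (Fin b))))).card : ℝ)
            then 1 else 0)
      ≤ 2 * (16 * θ) ^ ((k : ℝ) / 4) := by
  classical
  -- basic positivity facts
  have htrn : 1 ≤ t * r := by
    calc 1 = 1 * 1 := (one_mul 1).symm
    _ ≤ t * r := Nat.mul_le_mul ht hr
  have htr1 : (1:ℝ) ≤ ((t*r : ℕ):ℝ) := by exact_mod_cast htrn
  have htr0 : (0:ℝ) < ((t*r : ℕ):ℝ) := by linarith
  have hlogtr : 0 ≤ Real.logb 2 ((t*r:ℕ):ℝ) := Real.logb_nonneg one_lt_two htr1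
  have hs1 : (1:ℝ) ≤ (s:ℝ) := by exact_mod_cast hs
  have hk0 : (0:ℝ) ≤ (k:ℝ) := Nat.cast_nonneg k
  have hknum : 0 ≤ 4*(k:ℝ)*Real.logb 2 ((t*r:ℕ):ℝ) := mul_nonneg (by positivity) hlogtr
  have hXnn : 0 ≤ (4*(s:ℝ) + 4*(k:ℝ)*Real.logb 2 ((t*r:ℕ):ℝ))/((t*r:ℕ):ℝ) := by
    apply div_nonneg _ htr0.le
    linarith
  have hθsq : θ^2 * ((t*r:ℕ):ℝ) = 4*(s:ℝ) + 4*(k:ℝ)*Real.logb 2 ((t*r:ℕ):ℝ) := by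
    rw [hθdef, Real.sq_sqrt hXnn, div_mul_cancel₀ _ htr0.ne']
  have hθpos : 0 < θ := by
    rw [hθdef]
    apply Real.sqrt_pos.mpr
    apply div_pos _ htr0
    linarith
  have h4 : 4 ≤ θ^2 * ((t*r:ℕ):ℝ) := by rw [hθsq]; linarith
  have h16θ : (0:ℝ) < 16*θ := by linarith
  have h16 : (1:ℝ) ≤ 16*θ*((t*r:ℕ):ℝ) := by
    have hθtr : 0 ≤ θ * ((t*r:ℕ):ℝ) := by positivity
    nlinarith [h4, mul_le_mul_of_nonneg_right hθ hθtr]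
  have hrp0 : 0 < (16*θ)^((k:ℝ)/4) := Real.rpow_pos_of_pos h16θ _
  set R : ℝ := (16*θ)^((k:ℝ)/4) with hRdef
  set τ : ℝ := R / 2^s with hτdef
  have hτ0 : 0 < τ := by rw [hτdef]; positivity
  set m : ℕ := k/2 + 1 with hmdef
  have hmk : m ≤ k := by omega
  have hm2 : (k:ℝ)/2 ≤ (m:ℝ) := by
    rw [div_le_iff₀ (by norm_num : (0:ℝ) < 2)]
    have hkm : k ≤ m * 2 := by omega
    exact_mod_cast hkm
  have hiff : ∀ (c : ℕ), ((k:ℝ)/2 < (c:ℝ)) ↔ m ≤ c := by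
    intro c
    rw [div_lt_iff₀ (by norm_num : (0:ℝ) < 2)]
    constructor
    · intro h
      have hkc : k < c*2 := by exact_mod_cast h
      omega
    · intro h
      have hkc : k < c*2 := by omega
      exact_mod_cast hkc
  -- the bound on logb 2 (1/τ)
  have hLbound : Real.logb 2 (1/τ) ≤ θ^2 * ((t*r:ℕ):ℝ)/4 := by
    have h1τ : 1/τ = (2:ℝ)^s / R := by rw [hτdef, one_div_div]
    have hl2s : Real.logb 2 ((2:ℝ)^s) = (s:ℝ) := by
      rw [Real.logb_pow, Real.logb_self_eq_one (by norm_num), mul_one]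
    have hlrp : Real.logb 2 R = ((k:ℝ)/4) * Real.logb 2 (16*θ) := by
      rw [hRdef]
      exact Real.logb_rpow_eq_mul_logb_of_pos h16θ
    rw [h1τ, Real.logb_div (by positivity) hrp0.ne', hl2s, hlrp]
    have key : -Real.logb 2 (16*θ) ≤ Real.logb 2 ((t*r:ℕ):ℝ) := by
      rw [← Real.logb_inv]
      have hinv : (16*θ)⁻¹ ≤ ((t*r:ℕ):ℝ) := by
        rw [← one_div, div_le_iff₀ h16θ]
        calc (1:ℝ) ≤ 16*θ*((t*r:ℕ):ℝ) := h16
          _ = ((t*r:ℕ):ℝ) * (16*θ) := by ring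
      exact Real.logb_le_logb_of_le one_lt_two (inv_pos.mpr h16θ) hinv
    have hkey2 := mul_le_mul_of_nonneg_left key hk0
    have hklog := mul_nonneg hk0 hlogtr
    nlinarith [hθsq]
  have hN0 : (0:ℝ) < (Fintype.card (Fin k → Fin t → Fin r → Equiv.Perm (Fin b)) : ℝ) := by
    exact_mod_cast Fintype.card_pos
  have hcardCn : Fintype.card (Fin t × Fin r) = t * r := by
    rw [Fintype.card_prod, Fintype.card_fin, Fintype.card_fin]
  have hcardC : ((Fintype.card (Fin t × Fin r)) : ℝ) = ((t*r:ℕ):ℝ) := by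
    rw [hcardCn]
  have hcardPV : ((Fintype.card (Fin k → Fin t × Fin r)) : ℝ) = ((t*r:ℕ):ℝ)^k := by
    rw [Fintype.card_fun, Fintype.card_fin, hcardCn, Nat.cast_pow]
  -- main pointwise bound
  have hpoint : ∀ π : T,
      (((Finset.univ.filter
          (fun S : Fin k → Fin t → Fin r → Equiv.Perm (Fin b) => Prot S = π)).card : ℝ)
        / (Fintype.card (Fin k → Fin t → Fin r → Equiv.Perm (Fin b)) : ℝ))
      * ((1 / ((t * r : ℕ) : ℝ) ^ k)
        * ∑ pv : Fin k → Fin t × Fin r,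
          (if (k : ℝ) / 2 <
              ((Finset.univ.filter (fun i : Fin k =>
                  θ < KL (condLaw Prot π i (pv i).1 (pv i).2)
                        (unif (Equiv.Perm (Fin b))))).card : ℝ)
            then (1:ℝ) else 0))
      ≤ τ + (((Finset.univ.filter
          (fun S : Fin k → Fin t → Fin r → Equiv.Perm (Fin b) => Prot S = π)).card : ℝ)
        / (Fintype.card (Fin k → Fin t → Fin r → Equiv.Perm (Fin b)) : ℝ)) * R := by
    intro π
    set F : Finset (Fin k → Fin t → Fin r → Equiv.Perm (Fin b)) :=
      Finset.univ.filter (fun S => Prot S = π) with hFdef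
    set w : ℝ := ((F.card : ℝ)
      / (Fintype.card (Fin k → Fin t → Fin r → Equiv.Perm (Fin b)) : ℝ)) with hwdef
    have hw0 : 0 ≤ w := by rw [hwdef]; positivity
    set I : ℝ := ∑ pv : Fin k → Fin t × Fin r,
          (if (k : ℝ) / 2 <
              ((Finset.univ.filter (fun i : Fin k =>
                  θ < KL (condLaw Prot π i (pv i).1 (pv i).2)
                        (unif (Equiv.Perm (Fin b))))).card : ℝ)
            then (1:ℝ) else 0) with hIdef
    have hI0 : 0 ≤ I := by
      rw [hIdef]
      apply Finset.sum_nonneg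
      intro pv _
      split <;> norm_num
    have hI1 : I ≤ ((t*r:ℕ):ℝ)^k := by
      rw [hIdef]
      calc (∑ pv : Fin k → Fin t × Fin r,
          (if (k : ℝ) / 2 <
              ((Finset.univ.filter (fun i : Fin k =>
                  θ < KL (condLaw Prot π i (pv i).1 (pv i).2)
                        (unif (Equiv.Perm (Fin b))))).card : ℝ)
            then (1:ℝ) else 0))
          ≤ ∑ _pv : Fin k → Fin t × Fin r, (1:ℝ) := by
            apply Finset.sum_le_sum
            intro pv _
            split <;> norm_num
        _ = ((Fintype.card (Fin k → Fin t × Fin r)) : ℝ) := by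
            rw [Finset.sum_const, nsmul_eq_mul, mul_one, Finset.card_univ]
        _ = ((t*r:ℕ):ℝ)^k := hcardPV
    by_cases hw : w ≤ τ
    · calc w * ((1 / ((t * r : ℕ) : ℝ) ^ k) * I) ≤ w * 1 := by
            apply mul_le_mul_of_nonneg_left _ hw0
            rw [one_div, inv_mul_le_iff₀ (by positivity), mul_one]
            exact hI1
        _ = w := mul_one w
        _ ≤ τ := hw
        _ ≤ τ + w * R := by
          have hwR : 0 ≤ w * R := mul_nonneg hw0 hrp0.le
          linarith
    · -- main case : w > τ
      push_neg at hw
      have hFpos : 0 < F.card := by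
        rcases Nat.eq_zero_or_pos F.card with h0 | h0
        · exfalso
          rw [hwdef, h0] at hw
          norm_num at hw
          exact absurd hw (not_lt.mpr hτ0.le)
        · exact h0
      have hn : (0:ℝ) < (F.card:ℝ) := by exact_mod_cast hFpos
      have hmarg : ∀ (i : Fin k) (ℓ : Fin t) (v : Fin r),
          condLaw Prot π i ℓ v = marg F i ℓ v := by
        intro i ℓ v
        funext x
        simp only [condLaw, marg, hFdef, Finset.filter_filter]
      have hKL0 : ∀ (i : Fin k) (ℓ : Fin t) (v : Fin r),
          0 ≤ KL (condLaw Prot π i ℓ v) (unif (Equiv.Perm (Fin b))) := by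
        intro i ℓ v
        rw [hmarg]
        exact KL_nonneg _ (fun x => marg_nonneg F i ℓ v x) (marg_sum_one F hFpos i ℓ v)
      have htot : ∑ i : Fin k, ∑ ℓ : Fin t, ∑ v : Fin r,
          KL (condLaw Prot π i ℓ v) (unif (Equiv.Perm (Fin b))) ≤ Real.logb 2 (1/τ) := by
        calc ∑ i : Fin k, ∑ ℓ : Fin t, ∑ v : Fin r,
            KL (condLaw Prot π i ℓ v) (unif (Equiv.Perm (Fin b)))
            = ∑ i : Fin k, ∑ ℓ : Fin t, ∑ v : Fin r,
                KL (marg F i ℓ v) (unif (Equiv.Perm (Fin b))) := by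
              apply Finset.sum_congr rfl; intro i _
              apply Finset.sum_congr rfl; intro ℓ _
              apply Finset.sum_congr rfl; intro v _
              rw [hmarg]
          _ ≤ Real.logb 2
                ((Fintype.card (Fin k → Fin t → Fin r → Equiv.Perm (Fin b)) : ℝ)/(F.card:ℝ)) :=
              kl_total F hFpos
          _ ≤ Real.logb 2 (1/τ) := by
              apply Real.logb_le_logb_of_le one_lt_two (div_pos hN0 hn)
              rw [div_le_div_iff₀ hn hτ0]
              have hwn : τ * (Fintype.card (Fin k → Fin t → Fin r → Equiv.Perm (Fin b)) : ℝ)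
                  < (F.card : ℝ) := by
                rw [hwdef] at hw
                exact (lt_div_iff₀ hN0).mp hw
              nlinarith [hwn]
      have hBi : ∀ i : Fin k,
          ((Finset.univ.filter (fun c : Fin t × Fin r =>
              θ < KL (condLaw Prot π i c.1 c.2) (unif (Equiv.Perm (Fin b))))).card : ℝ)
            ≤ (θ/4) * ((Fintype.card (Fin t × Fin r)) : ℝ) := by
        intro i
        have h1 : (((Finset.univ.filter (fun c : Fin t × Fin r =>
              θ < KL (condLaw Prot π i c.1 c.2) (unif (Equiv.Perm (Fin b))))).card : ℝ)) * θ
            ≤ ∑ c ∈ Finset.univ.filter (fun c : Fin t × Fin r =>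
              θ < KL (condLaw Prot π i c.1 c.2) (unif (Equiv.Perm (Fin b)))),
                KL (condLaw Prot π i c.1 c.2) (unif (Equiv.Perm (Fin b))) := by
          calc (((Finset.univ.filter (fun c : Fin t × Fin r =>
              θ < KL (condLaw Prot π i c.1 c.2) (unif (Equiv.Perm (Fin b))))).card : ℝ)) * θ
              = ∑ _c ∈ Finset.univ.filter (fun c : Fin t × Fin r =>
                  θ < KL (condLaw Prot π i c.1 c.2) (unif (Equiv.Perm (Fin b)))), θ := by
                rw [Finset.sum_const, nsmul_eq_mul]
            _ ≤ _ := Finset.sum_le_sum fun c hc => le_of_lt (Finset.mem_filter.mp hc).2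
        have h2 : ∑ c ∈ Finset.univ.filter (fun c : Fin t × Fin r =>
              θ < KL (condLaw Prot π i c.1 c.2) (unif (Equiv.Perm (Fin b)))),
                KL (condLaw Prot π i c.1 c.2) (unif (Equiv.Perm (Fin b)))
            ≤ ∑ c : Fin t × Fin r,
                KL (condLaw Prot π i c.1 c.2) (unif (Equiv.Perm (Fin b))) :=
          Finset.sum_le_sum_of_subset_of_nonneg (Finset.subset_univ _)
            (fun c _ _ => hKL0 i c.1 c.2)
        have h3 : ∑ c : Fin t × Fin r,
              KL (condLaw Prot π i c.1 c.2) (unif (Equiv.Perm (Fin b)))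
            = ∑ ℓ : Fin t, ∑ v : Fin r,
                KL (condLaw Prot π i ℓ v) (unif (Equiv.Perm (Fin b))) :=
          Fintype.sum_prod_type _
        have h4 : ∑ ℓ : Fin t, ∑ v : Fin r,
              KL (condLaw Prot π i ℓ v) (unif (Equiv.Perm (Fin b)))
            ≤ ∑ i' : Fin k, ∑ ℓ : Fin t, ∑ v : Fin r,
                KL (condLaw Prot π i' ℓ v) (unif (Equiv.Perm (Fin b))) :=
          Finset.single_le_sum (f := fun i' => ∑ ℓ : Fin t, ∑ v : Fin r,
              KL (condLaw Prot π i' ℓ v) (unif (Equiv.Perm (Fin b))))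
            (fun i' _ => Finset.sum_nonneg fun ℓ _ =>
              Finset.sum_nonneg fun v _ => hKL0 i' ℓ v)
            (Finset.mem_univ i)
        have h5 : (((Finset.univ.filter (fun c : Fin t × Fin r =>
              θ < KL (condLaw Prot π i c.1 c.2) (unif (Equiv.Perm (Fin b))))).card : ℝ)) * θ
            ≤ θ^2*((t*r:ℕ):ℝ)/4 := by
          rw [h3] at h2
          linarith [h1, h2, h4, htot, hLbound]
        rw [hcardC, ← mul_le_mul_iff_of_pos_right hθpos]
        exact h5.trans (le_of_eq (by ring))
      have hPMG := prob_many_good (C := Fin t × Fin r) hmk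
        (fun i c => θ < KL (condLaw Prot π i c.1 c.2) (unif (Equiv.Perm (Fin b))))
        (θ/4) (by positivity) hBi
      have hImain : I ≤ (k.choose m : ℝ) * (θ/4)^m * ((t*r:ℕ):ℝ)^k := by
        rw [hIdef]
        calc (∑ pv : Fin k → Fin t × Fin r,
            (if (k : ℝ) / 2 <
                ((Finset.univ.filter (fun i : Fin k =>
                    θ < KL (condLaw Prot π i (pv i).1 (pv i).2)
                          (unif (Equiv.Perm (Fin b))))).card : ℝ)
              then (1:ℝ) else 0))
            = ∑ pv : Fin k → Fin t × Fin r,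
              (if m ≤ (Finset.univ.filter (fun i : Fin k =>
                    θ < KL (condLaw Prot π i (pv i).1 (pv i).2)
                          (unif (Equiv.Perm (Fin b))))).card
                then (1:ℝ) else 0) :=
              Finset.sum_congr rfl fun pv _ => if_congr (hiff _) rfl rfl
          _ ≤ (k.choose m : ℝ) * (θ/4)^m * ((Fintype.card (Fin t × Fin r)) : ℝ)^k := hPMG
          _ = (k.choose m : ℝ) * (θ/4)^m * ((t*r:ℕ):ℝ)^k := by rw [hcardC]
      have hratio : (1 / ((t*r:ℕ):ℝ)^k) * I ≤ R := by
        have h6 : (1/((t*r:ℕ):ℝ)^k) * I ≤ (k.choose m:ℝ)*(θ/4)^m := by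
          rw [one_div, inv_mul_le_iff₀ (by positivity)]
          exact hImain.trans_eq (by ring)
        have h7 : (k.choose m:ℝ)*(θ/4)^m ≤ R := by
          calc (k.choose m:ℝ)*(θ/4)^m ≤ (2:ℝ)^k * (θ/4)^m := by
                apply mul_le_mul_of_nonneg_right _ (by positivity)
                have hc2 : k.choose m ≤ 2^k := by
                  have h8 : k.choose m ≤ ∑ j ∈ Finset.range (k+1), k.choose j :=
                    Finset.single_le_sum (f := fun j => k.choose j)
                      (fun j _ => Nat.zero_le _) (Finset.mem_range.mpr (by omega))
                  rw [Nat.sum_range_choose] at h8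
                  exact h8
                exact_mod_cast hc2
            _ ≤ R := by rw [hRdef]; exact rpow_chain θ hθpos hθ k m hm2
        linarith
      calc w * ((1/((t*r:ℕ):ℝ)^k) * I) ≤ w * R := mul_le_mul_of_nonneg_left hratio hw0
        _ ≤ τ + w * R := by linarith [hτ0.le]
  -- final assembly
  have hwsum : ∑ π : T, (((Finset.univ.filter
      (fun S : Fin k → Fin t → Fin r → Equiv.Perm (Fin b) => Prot S = π)).card : ℝ)
      / (Fintype.card (Fin k → Fin t → Fin r → Equiv.Perm (Fin b)) : ℝ)) = 1 := by
    rw [← Finset.sum_div, ← Nat.cast_sum]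
    have hcards : ∑ π ∈ (Finset.univ : Finset T),
        (Finset.univ.filter
          (fun S : Fin k → Fin t → Fin r → Equiv.Perm (Fin b) => Prot S = π)).card
        = Fintype.card (Fin k → Fin t → Fin r → Equiv.Perm (Fin b)) := by
      rw [← Finset.card_univ (α := Fin k → Fin t → Fin r → Equiv.Perm (Fin b))]
      exact (Finset.card_eq_sum_card_fiberwise (fun S _ => Finset.mem_univ (Prot S))).symm
    rw [hcards, div_self hN0.ne']
  calc ∑ π : T, ∑ pv : Fin k → Fin t × Fin r,
      (((Finset.univ.filter
            (fun S : Fin k → Fin t → Fin r → Equiv.Perm (Fin b) => Prot S = π)).card : ℝ)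
          / (Fintype.card (Fin k → Fin t → Fin r → Equiv.Perm (Fin b)) : ℝ))
        * (1 / ((t * r : ℕ) : ℝ) ^ k)
        * (if (k : ℝ) / 2 <
              ((Finset.univ.filter (fun i : Fin k =>
                  θ < KL (condLaw Prot π i (pv i).1 (pv i).2)
                        (unif (Equiv.Perm (Fin b))))).card : ℝ)
            then 1 else 0)
      = ∑ π : T,
        (((Finset.univ.filter
            (fun S : Fin k → Fin t → Fin r → Equiv.Perm (Fin b) => Prot S = π)).card : ℝ)
          / (Fintype.card (Fin k → Fin t → Fin r → Equiv.Perm (Fin b)) : ℝ))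
        * ((1 / ((t * r : ℕ) : ℝ) ^ k)
          * ∑ pv : Fin k → Fin t × Fin r,
            (if (k : ℝ) / 2 <
                ((Finset.univ.filter (fun i : Fin k =>
                    θ < KL (condLaw Prot π i (pv i).1 (pv i).2)
                          (unif (Equiv.Perm (Fin b))))).card : ℝ)
              then (1:ℝ) else 0)) := by
        apply Finset.sum_congr rfl
        intro π _
        rw [← Finset.mul_sum, mul_assoc]
    _ ≤ ∑ π : T, (τ + (((Finset.univ.filter
          (fun S : Fin k → Fin t → Fin r → Equiv.Perm (Fin b) => Prot S = π)).card : ℝ)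
          / (Fintype.card (Fin k → Fin t → Fin r → Equiv.Perm (Fin b)) : ℝ)) * R) :=
        Finset.sum_le_sum fun π _ => hpoint π
    _ = (Fintype.card T : ℝ) * τ + (∑ π : T, (((Finset.univ.filter
          (fun S : Fin k → Fin t → Fin r → Equiv.Perm (Fin b) => Prot S = π)).card : ℝ)
          / (Fintype.card (Fin k → Fin t → Fin r → Equiv.Perm (Fin b)) : ℝ))) * R := by
        rw [Finset.sum_add_distrib, Finset.sum_const, Finset.card_univ, nsmul_eq_mul,
          ← Finset.sum_mul]
    _ ≤ (2:ℝ)^s * τ + 1 * R := by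
        apply add_le_add
        · apply mul_le_mul_of_nonneg_right _ hτ0.le
          exact_mod_cast hT
        · rw [hwsum]
    _ = 2 * R := by
        rw [hτdef, mul_div_cancel₀ _ (by positivity : ((2:ℝ)^s) ≠ 0), one_mul]
        ring
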